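/- arXiv:1807.11802 — 5 statements merged into one kernel-verified Lean document; each statement's English description precedes it below -/
import Mathlib

section
/- Let H be a separable complex Hilbert space, let a be a bounded, hermitian, elliptic sesquilinear form on H, let C : H → H be a compact linear operator, and let b(u,v) := a(u,v) + ⟨C u, v⟩ be well-posed. Let (X_ℓ)_{ℓ∈ℕ} be a sequence of closed subspaces of H that is dense in the sense that for every ψ ∈ H the distance dist(ψ, X_ℓ) → 0 as ℓ → ∞. Then there exist an index ℓ• ∈ ℕ and a constant β > 0 such that every closed subspace X of H with X_{ℓ•} ⊆ X satisfies the discrete inf-sup condition β ≤ β_X, i.e., for every Φ ∈ X with Φ ≠ 0 one has β·‖Φ‖ ≤ sup over Ψ ∈ X with Ψ ≠ 0 of |b(Φ,Ψ)|/‖Ψ‖. -/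
/-!
Write `b u v = ⟪v, T u⟫` with `T = A + C`, where `A` represents `a` and is coercive, hence
invertible. The heart of the proof is a Gårding-type bound
`β ‖Φ‖ ≤ ‖P_ℓ (T Φ)‖ + |⟪Φ, T Φ⟫| / ‖Φ‖` for a single index `ℓ`, with `P_ℓ` the orthogonal
projection onto `X ℓ`. If it failed for every `ℓ`, there would be unit vectors `u_ℓ` with
`P_ℓ (T u_ℓ) → 0` and `⟪u_ℓ, T u_ℓ⟫ → 0`; density of the `X ℓ` makes `T u_ℓ ⇀ 0`. Along a
subsequence `C u_ℓ` converges, and coercivity of `A` then forces `u_ℓ` itself to converge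
strongly, to a unit vector in the kernel of `T`, contradicting well-posedness. On any
`Y ⊇ X ℓ` both terms of the bound are at most the inf-sup quotient, tested with `Ψ = Φ` and
`Ψ = P_ℓ (T Φ)`.
-/

open scoped InnerProductSpace ComplexConjugate
open Filter Topology

section

open RCLike

variable {𝕜 H : Type*} [RCLike 𝕜] [NormedAddCommGroup H] [InnerProductSpace 𝕜 H]

theorem exists_clm_inner_eq_of_sesquilinear [CompleteSpace H] (a : H → H → 𝕜)
    (add_left : ∀ u v w, a (u + v) w = a u w + a v w)
    (smul_left : ∀ (c : 𝕜) u v, a (c • u) v = c * a u v)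
    (add_right : ∀ u v w, a u (v + w) = a u v + a u w)
    (smul_right : ∀ (c : 𝕜) u v, a u (c • v) = conj c * a u v)
    (M : ℝ) (bdd : ∀ u v, ‖a u v‖ ≤ M * ‖u‖ * ‖v‖) :
    ∃ A : H →L[𝕜] H, ∀ u v, ⟪v, A u⟫_𝕜 = a u v := by
  let B : H →L⋆[𝕜] H →L[𝕜] 𝕜 :=
    (LinearMap.mk₂'ₛₗ (starRingEnd 𝕜) (RingHom.id 𝕜) (fun u v => conj (a u v))
      (fun u₁ u₂ v => by simp [add_left]) (fun c u v => by simp [smul_left])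
      (fun u v₁ v₂ => by simp [add_right]) (fun c u v => by simp [smul_right])).mkContinuous₂ M
      (fun u v => by simpa using bdd u v)
  refine ⟨InnerProductSpace.continuousLinearMapOfBilin B, fun u v => ?_⟩
  rw [← inner_conj_symm, InnerProductSpace.continuousLinearMapOfBilin_apply]
  simp [B]

theorem Submodule.norm_sub_starProjection_eq_infDist (K : Submodule 𝕜 H)
    [K.HasOrthogonalProjection] (ψ : H) :
    ‖ψ - K.starProjection ψ‖ = Metric.infDist ψ K := by
  rw [Metric.infDist_eq_iInf, starProjection_minimal]
  simp_rw [dist_eq_norm]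
  rfl

theorem tendsto_starProjection_of_tendsto_infDist {ι : Type*} {l : Filter ι}
    {K : ι → Submodule 𝕜 H} [∀ i, (K i).HasOrthogonalProjection] {ψ : H}
    (h : Tendsto (fun i => Metric.infDist ψ (K i)) l (𝓝 0)) :
    Tendsto (fun i => (K i).starProjection ψ) l (𝓝 ψ) := by
  rw [tendsto_iff_norm_sub_tendsto_zero]
  simpa only [norm_sub_rev _ ψ, Submodule.norm_sub_starProjection_eq_infDist] using h

theorem tendsto_inner_zero_of_tendsto_starProjection {ι : Type*} {l : Filter ι}
    {K : ι → Submodule 𝕜 H} [∀ i, (K i).HasOrthogonalProjection] {y : ι → H} {R : ℝ}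
    (hy : ∀ i, ‖y i‖ ≤ R) (hKy : Tendsto (fun i => (K i).starProjection (y i)) l (𝓝 0))
    {ψ : H} (hψ : Tendsto (fun i => (K i).starProjection ψ) l (𝓝 ψ)) :
    Tendsto (fun i => ⟪ψ, y i⟫_𝕜) l (𝓝 0) := by
  have hsplit : ∀ i, ⟪ψ, y i⟫_𝕜 =
      ⟪ψ - (K i).starProjection ψ, y i⟫_𝕜 + ⟪ψ, (K i).starProjection (y i)⟫_𝕜 := fun i => by
    rw [← Submodule.inner_starProjection_left_eq_right, inner_sub_left, sub_add_cancel]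
  simp_rw [hsplit]
  rw [← add_zero (0 : 𝕜)]
  refine Tendsto.add ?_ (by simpa using tendsto_const_nhds.inner hKy)
  have hres : Tendsto (fun i => ‖ψ - (K i).starProjection ψ‖ * R) l (𝓝 0) := by
    simpa [norm_sub_rev] using (tendsto_iff_norm_sub_tendsto_zero.mp hψ).mul_const R
  refine squeeze_zero_norm (fun i => ?_) hres
  exact (norm_inner_le_norm _ _).trans (mul_le_mul_of_nonneg_left (hy i) (norm_nonneg _))

theorem exists_norm_eq_one_of_lt_mul_norm {L T : H →L[𝕜] H} {β : ℝ} {Φ : H}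
    (h : ‖L Φ‖ + ‖⟪Φ, T Φ⟫_𝕜‖ / ‖Φ‖ < β * ‖Φ‖) :
    ∃ u : H, ‖u‖ = 1 ∧ ‖L u‖ < β ∧ ‖⟪u, T u⟫_𝕜‖ < β := by
  have hΦ : Φ ≠ 0 := by
    rintro rfl
    simp at h
  have hn : 0 < ‖Φ‖ := norm_pos_iff.mpr hΦ
  have hL : ‖L Φ‖ < β * ‖Φ‖ := by linarith [div_nonneg (norm_nonneg ⟪Φ, T Φ⟫_𝕜) hn.le]
  have hT : ‖⟪Φ, T Φ⟫_𝕜‖ < ‖Φ‖ * ‖Φ‖ * β := by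
    have : ‖⟪Φ, T Φ⟫_𝕜‖ / ‖Φ‖ < β * ‖Φ‖ := by linarith [norm_nonneg (L Φ)]
    rw [div_lt_iff₀ hn] at this
    linarith
  refine ⟨(‖Φ‖⁻¹ : 𝕜) • Φ, ?_, ?_, ?_⟩
  · simp [norm_smul, hn.ne']
  · rw [map_smul, norm_smul, norm_inv, norm_algebraMap', norm_norm, inv_mul_lt_iff₀ hn, mul_comm]
    exact hL
  · rw [map_smul, inner_smul_left, inner_smul_right, norm_mul, norm_mul]
    simp only [RCLike.norm_conj, norm_inv, norm_algebraMap', norm_norm]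
    rwa [← mul_assoc, ← mul_inv, inv_mul_lt_iff₀ (by positivity)]

section Coercive

variable {A : H →L[𝕜] H} {α : ℝ}

theorem mul_norm_le_norm_apply_of_coercive (hA : ∀ u, α * ‖u‖ ^ 2 ≤ re ⟪u, A u⟫_𝕜) (u : H) :
    α * ‖u‖ ≤ ‖A u‖ := by
  rcases eq_or_ne u 0 with rfl | hu
  · simp
  refine le_of_mul_le_mul_right ?_ (norm_pos_iff.mpr hu)
  calc α * ‖u‖ * ‖u‖ = α * ‖u‖ ^ 2 := by ring
    _ ≤ re ⟪u, A u⟫_𝕜 := hA u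
    _ ≤ ‖⟪u, A u⟫_𝕜‖ := re_le_norm _
    _ ≤ ‖A u‖ * ‖u‖ := by rw [mul_comm]; exact norm_inner_le_norm _ _

theorem surjective_of_coercive [CompleteSpace H] (hα : 0 < α)
    (hA : ∀ u, α * ‖u‖ ^ 2 ≤ re ⟪u, A u⟫_𝕜) : Function.Surjective A := by
  have hanti : AntilipschitzWith ⟨α⁻¹, by positivity⟩ A :=
    A.antilipschitz_of_bound fun u => by
      change ‖u‖ ≤ α⁻¹ * ‖A u‖
      rw [← div_eq_inv_mul, le_div_iff₀' hα]
      exact mul_norm_le_norm_apply_of_coercive hA u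
  have : CompleteSpace A.range := (hanti.isClosed_range A.uniformContinuous).completeSpace_coe
  refine LinearMap.range_eq_top.mp ?_
  rw [← Submodule.orthogonal_eq_bot_iff, Submodule.eq_bot_iff]
  intro v hv
  have h : ⟪v, A v⟫_𝕜 = 0 :=
    Submodule.inner_left_of_mem_orthogonal (LinearMap.mem_range_self (A : H →ₗ[𝕜] H) v) hv
  have := hA v
  rw [h, map_zero] at this
  simpa using nonpos_of_mul_nonpos_right this hα

theorem mul_norm_sub_sq_le_of_coercive (hA : ∀ u, α * ‖u‖ ^ 2 ≤ re ⟪u, A u⟫_𝕜)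
    (C : H →L[𝕜] H) {φ w : H} (hφ : A φ = -w) (u : H) :
    α * ‖u - φ‖ ^ 2 ≤
      ‖⟪u, (A + C) u⟫_𝕜‖ + ‖⟪φ, (A + C) u⟫_𝕜‖ + ‖u - φ‖ * ‖C u - w‖ := by
  have hsplit : ⟪u - φ, A (u - φ)⟫_𝕜 =
      ⟪u, (A + C) u⟫_𝕜 - ⟪φ, (A + C) u⟫_𝕜 - ⟪u - φ, C u - w⟫_𝕜 := by
    rw [← inner_sub_left, ← inner_sub_right, map_sub, hφ, add_apply]
    congr 1
    abel
  calc α * ‖u - φ‖ ^ 2 ≤ re ⟪u - φ, A (u - φ)⟫_𝕜 := hA _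
    _ ≤ ‖⟪u - φ, A (u - φ)⟫_𝕜‖ := re_le_norm _
    _ ≤ _ := by
      rw [hsplit]
      exact (norm_sub_le _ _).trans (add_le_add (norm_sub_le _ _) (norm_inner_le_norm _ _))

theorem exists_tendsto_and_add_apply_eq_zero [CompleteSpace H] (hα : 0 < α)
    (hA : ∀ u, α * ‖u‖ ^ 2 ≤ re ⟪u, A u⟫_𝕜) {C : H →L[𝕜] H} {ι : Type*} {l : Filter ι}
    [l.NeBot] {u : ι → H} {R : ℝ} {w : H} (hu : ∀ i, ‖u i‖ ≤ R)
    (hCu : Tendsto (fun i => C (u i)) l (𝓝 w))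
    (hdiag : Tendsto (fun i => ⟪u i, (A + C) (u i)⟫_𝕜) l (𝓝 0))
    (hweak : ∀ ψ, Tendsto (fun i => ⟪ψ, (A + C) (u i)⟫_𝕜) l (𝓝 0)) :
    ∃ φ, Tendsto u l (𝓝 φ) ∧ (A + C) φ = 0 := by
  obtain ⟨φ, hφ⟩ := surjective_of_coercive hα hA (-w)
  have hbound : ∀ i, ‖u i - φ‖ ^ 2 ≤ α⁻¹ * (‖⟪u i, (A + C) (u i)⟫_𝕜‖ +
      ‖⟪φ, (A + C) (u i)⟫_𝕜‖ + (R + ‖φ‖) * ‖C (u i) - w‖) := fun i => by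
    rw [le_inv_mul_iff₀ hα]
    refine (mul_norm_sub_sq_le_of_coercive hA C hφ (u i)).trans ?_
    gcongr
    exact (norm_sub_le _ _).trans (by gcongr; exact hu i)
  have hrhs : Tendsto (fun i => α⁻¹ * (‖⟪u i, (A + C) (u i)⟫_𝕜‖ +
      ‖⟪φ, (A + C) (u i)⟫_𝕜‖ + (R + ‖φ‖) * ‖C (u i) - w‖)) l (𝓝 0) := by
    simpa using ((hdiag.norm.add (hweak φ).norm).add
      ((tendsto_iff_norm_sub_tendsto_zero.mp hCu).const_mul (R + ‖φ‖))).const_mul α⁻¹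
  have hlim : Tendsto u l (𝓝 φ) := by
    rw [tendsto_iff_norm_sub_tendsto_zero]
    simpa using (squeeze_zero (fun i => by positivity) hbound hrhs).sqrt
  refine ⟨φ, hlim, inner_self_eq_zero.mp (tendsto_nhds_unique ?_ (hweak ((A + C) φ)))⟩
  exact tendsto_const_nhds.inner (((A + C).continuous.tendsto φ).comp hlim)

theorem exists_subseq_tendsto_and_add_apply_eq_zero [CompleteSpace H] (hα : 0 < α)
    (hA : ∀ u, α * ‖u‖ ^ 2 ≤ re ⟪u, A u⟫_𝕜) {C : H →L[𝕜] H} (hC : IsCompactOperator C)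
    {u : ℕ → H} {R : ℝ} (hu : ∀ n, ‖u n‖ ≤ R)
    (hdiag : Tendsto (fun n => ⟪u n, (A + C) (u n)⟫_𝕜) atTop (𝓝 0))
    (hweak : ∀ ψ, Tendsto (fun n => ⟪ψ, (A + C) (u n)⟫_𝕜) atTop (𝓝 0)) :
    ∃ (φ : H) (g : ℕ → ℕ), StrictMono g ∧ Tendsto (u ∘ g) atTop (𝓝 φ) ∧ (A + C) φ = 0 := by
  obtain ⟨K, hK, hCK⟩ := hC.image_closedBall_subset_compact R
  obtain ⟨w, -, g, hg, hw⟩ := hK.tendsto_subseq fun n =>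
    hCK ⟨u n, mem_closedBall_zero_iff.mpr (hu n), rfl⟩
  obtain ⟨φ, hφ, hker⟩ := exists_tendsto_and_add_apply_eq_zero hα hA (fun n => hu (g n)) hw
    (hdiag.comp hg.tendsto_atTop) (fun ψ => (hweak ψ).comp hg.tendsto_atTop)
  exact ⟨φ, g, hg, hφ, hker⟩

theorem exists_lower_bound_of_coercive_add_compact [CompleteSpace H] (hα : 0 < α)
    (hA : ∀ u, α * ‖u‖ ^ 2 ≤ re ⟪u, A u⟫_𝕜) {C : H →L[𝕜] H} (hC : IsCompactOperator C)
    (hinj : ∀ φ, (A + C) φ = 0 → φ = 0) (X : ℕ → Submodule 𝕜 H)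
    [∀ n, (X n).HasOrthogonalProjection]
    (hX : ∀ ψ, Tendsto (fun n => (X n).starProjection ψ) atTop (𝓝 ψ)) :
    ∃ (n : ℕ) (β : ℝ), 0 < β ∧ ∀ Φ,
      β * ‖Φ‖ ≤ ‖(X n).starProjection ((A + C) Φ)‖ + ‖⟪Φ, (A + C) Φ⟫_𝕜‖ / ‖Φ‖ := by
  by_contra! hcon
  have hseq : ∀ n : ℕ, ∃ u, ‖u‖ = 1 ∧ ‖(X n).starProjection ((A + C) u)‖ < 1 / (n + 1) ∧
      ‖⟪u, (A + C) u⟫_𝕜‖ < 1 / (n + 1) := fun n =>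
    have ⟨_, hΦ⟩ := hcon n (1 / (n + 1)) (by positivity)
    exists_norm_eq_one_of_lt_mul_norm (L := (X n).starProjection ∘L (A + C)) hΦ
  choose u hu hP hdiag using hseq
  have hP' : Tendsto (fun n => (X n).starProjection ((A + C) (u n))) atTop (𝓝 0) :=
    squeeze_zero_norm (fun n => (hP n).le) tendsto_one_div_add_atTop_nhds_zero_nat
  have hdiag' : Tendsto (fun n => ⟪u n, (A + C) (u n)⟫_𝕜) atTop (𝓝 0) :=
    squeeze_zero_norm (fun n => (hdiag n).le) tendsto_one_div_add_atTop_nhds_zero_nat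
  have hweak := fun ψ => tendsto_inner_zero_of_tendsto_starProjection
    (fun n => (A + C).le_opNorm_of_le (hu n).le) hP' (hX ψ)
  obtain ⟨φ, g, -, hφ, hker⟩ :=
    exists_subseq_tendsto_and_add_apply_eq_zero hα hA hC (fun n => (hu n).le) hdiag' hweak
  have hφ1 : ‖φ‖ = 1 := tendsto_nhds_unique hφ.norm (by simp [hu])
  simp [hinj φ hker] at hφ1

end Coercive

section InfSup

variable (Y : Submodule 𝕜 H) (y : H)

theorem norm_inner_div_norm_le_iSup {Ψ : H} (hΨ : Ψ ∈ Y) (hΨ0 : Ψ ≠ 0) :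
    ‖⟪Ψ, y⟫_𝕜‖ / ‖Ψ‖ ≤ ⨆ Ψ : {Ψ : H // Ψ ∈ Y ∧ Ψ ≠ 0}, ‖⟪Ψ.1, y⟫_𝕜‖ / ‖Ψ.1‖ := by
  refine le_ciSup (f := fun Ψ : {Ψ : H // Ψ ∈ Y ∧ Ψ ≠ 0} => ‖⟪Ψ.1, y⟫_𝕜‖ / ‖Ψ.1‖)
    ⟨‖y‖, ?_⟩ ⟨Ψ, hΨ, hΨ0⟩
  rintro _ ⟨Ψ', rfl⟩
  exact div_le_of_le_mul₀ (norm_nonneg _) (norm_nonneg _)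
    (by rw [mul_comm]; exact norm_inner_le_norm _ _)

theorem norm_starProjection_le_iSup {K : Submodule 𝕜 H} [K.HasOrthogonalProjection]
    (hKY : K ≤ Y) :
    ‖K.starProjection y‖ ≤ ⨆ Ψ : {Ψ : H // Ψ ∈ Y ∧ Ψ ≠ 0}, ‖⟪Ψ.1, y⟫_𝕜‖ / ‖Ψ.1‖ := by
  rcases eq_or_ne (K.starProjection y) 0 with hq | hq
  · rw [hq, norm_zero]
    exact Real.iSup_nonneg fun _ => by positivity
  refine le_trans ?_ (norm_inner_div_norm_le_iSup Y y (hKY (K.starProjection_apply_mem y)) hq)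
  rw [le_div_iff₀ (norm_pos_iff.mpr hq), ← sq]
  calc ‖K.starProjection y‖ ^ 2 = re ⟪K.starProjection y, y⟫_𝕜 := by
        rw [Submodule.re_inner_starProjection_eq_normSq, Submodule.starProjection_apply,
          Submodule.coe_norm]
    _ ≤ ‖⟪K.starProjection y, y⟫_𝕜‖ := re_le_norm _

end InfSup

end

theorem statement1_general
    {H : Type*} [NormedAddCommGroup H] [InnerProductSpace ℂ H] [CompleteSpace H]
    (a : H → H → ℂ)
    (ha_add₁ : ∀ u v w : H, a (u + v) w = a u w + a v w)
    (ha_smul₁ : ∀ (c : ℂ) (u v : H), a (c • u) v = c * a u v)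
    (ha_add₂ : ∀ u v w : H, a u (v + w) = a u v + a u w)
    (ha_smul₂ : ∀ (c : ℂ) (u v : H), a u (c • v) = conj c * a u v)
    (M : ℝ) (ha_bdd : ∀ u v : H, ‖a u v‖ ≤ M * ‖u‖ * ‖v‖)
    (α : ℝ) (hα : 0 < α) (ha_ell : ∀ u : H, α * ‖u‖ ^ 2 ≤ (a u u).re)
    (C : H →L[ℂ] H) (hC : IsCompactOperator C)
    (b : H → H → ℂ) (hb : ∀ u v : H, b u v = a u v + ⟪v, C u⟫_ℂ)
    (hwp : ∀ φ : H, (∀ ψ : H, b φ ψ = 0) → φ = 0)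
    (X : ℕ → Submodule ℂ H) (hXc : ∀ ℓ, IsClosed (X ℓ : Set H))
    (hdense : ∀ ψ : H,
      Filter.Tendsto (fun ℓ => Metric.infDist ψ (X ℓ : Set H)) Filter.atTop (nhds 0)) :
    ∃ (ℓs : ℕ) (β : ℝ), 0 < β ∧
      ∀ Y : Submodule ℂ H, IsClosed (Y : Set H) → X ℓs ≤ Y →
        ∀ Φ : H, Φ ∈ Y → Φ ≠ 0 →
          β * ‖Φ‖ ≤ ⨆ Ψ : {Ψ : H // Ψ ∈ Y ∧ Ψ ≠ 0}, ‖b Φ Ψ.1‖ / ‖Ψ.1‖ := by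
  obtain ⟨A, hA⟩ :=
    exists_clm_inner_eq_of_sesquilinear a ha_add₁ ha_smul₁ ha_add₂ ha_smul₂ M ha_bdd
  have hbT : ∀ u v, b u v = ⟪v, (A + C) u⟫_ℂ := fun u v => by
    rw [hb, add_apply, inner_add_right, hA]
  have hcoer : ∀ u, α * ‖u‖ ^ 2 ≤ RCLike.re ⟪u, A u⟫_ℂ := fun u => by
    rw [hA]
    exact ha_ell u
  have hXcomplete : ∀ ℓ, CompleteSpace (X ℓ) := fun ℓ => (hXc ℓ).completeSpace_coe
  obtain ⟨ℓs, β, hβ, hbound⟩ := exists_lower_bound_of_coercive_add_compact hα hcoer hC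
    (fun φ hφ => hwp φ fun ψ => by rw [hbT, hφ, inner_zero_right]) X
    (fun ψ => tendsto_starProjection_of_tendsto_infDist (hdense ψ))
  refine ⟨ℓs, β / 2, half_pos hβ, fun Y _ hXY Φ hΦ hΦ0 => ?_⟩
  simp_rw [hbT]
  linarith [hbound Φ, norm_starProjection_le_iSup Y ((A + C) Φ) hXY,
    norm_inner_div_norm_le_iSup Y ((A + C) Φ) hΦ hΦ0]

/-- Uniform discrete inf-sup stability of the compactly perturbed
elliptic form `b(u,v) = a(u,v) + ⟨C u, v⟩` on a separable complex Hilbert space: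
if the closed subspaces `X ℓ` approximate every element of `H` (the distances
tend to zero), then there exist an index `ℓ•` and `β > 0` such that every closed
subspace containing `X ℓ•` satisfies the discrete inf-sup condition with
constant `β`. -/
theorem statement1
    {H : Type*} [NormedAddCommGroup H] [InnerProductSpace ℂ H] [CompleteSpace H]
    [TopologicalSpace.SeparableSpace H]
    (a : H → H → ℂ)
    (ha_add₁ : ∀ u v w : H, a (u + v) w = a u w + a v w)
    (ha_smul₁ : ∀ (c : ℂ) (u v : H), a (c • u) v = c * a u v)
    (ha_add₂ : ∀ u v w : H, a u (v + w) = a u v + a u w)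
    (ha_smul₂ : ∀ (c : ℂ) (u v : H), a u (c • v) = conj c * a u v)
    (M : ℝ) (hM : 0 < M) (ha_bdd : ∀ u v : H, ‖a u v‖ ≤ M * ‖u‖ * ‖v‖)
    (ha_herm : ∀ u v : H, a u v = conj (a v u))
    (α : ℝ) (hα : 0 < α) (ha_ell : ∀ u : H, α * ‖u‖ ^ 2 ≤ (a u u).re)
    (C : H →L[ℂ] H) (hC : IsCompactOperator C)
    (b : H → H → ℂ) (hb : ∀ u v : H, b u v = a u v + ⟪v, C u⟫_ℂ)
    (hwp : ∀ φ : H, (∀ ψ : H, b φ ψ = 0) → φ = 0)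
    (X : ℕ → Submodule ℂ H) (hXc : ∀ ℓ, IsClosed (X ℓ : Set H))
    (hdense : ∀ ψ : H,
      Filter.Tendsto (fun ℓ => Metric.infDist ψ (X ℓ : Set H)) Filter.atTop (nhds 0)) :
    ∃ (ℓs : ℕ) (β : ℝ), 0 < β ∧
      ∀ Y : Submodule ℂ H, IsClosed (Y : Set H) → X ℓs ≤ Y →
        ∀ Φ : H, Φ ∈ Y → Φ ≠ 0 →
          β * ‖Φ‖ ≤ ⨆ Ψ : {Ψ : H // Ψ ∈ Y ∧ Ψ ≠ 0}, ‖b Φ Ψ.1‖ / ‖Ψ.1‖ :=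
  statement1_general a ha_add₁ ha_smul₁ ha_add₂ ha_smul₂ M ha_bdd α hα ha_ell C hC b hb hwp X hXc
    hdense
end

section
/- Let H be a complex Hilbert space, let C : H → H be a compact linear operator, and let b(u,v) := ⟨u,v⟩ + ⟨C u, v⟩, where ⟨·,·⟩ is the inner product of H; assume b is well-posed, i.e., (b(φ,ψ) = 0 for all ψ ∈ H) implies φ = 0. Let (X_ℓ)_{ℓ∈ℕ} be a nested sequence of finite-dimensional subspaces with dist(ψ, X_ℓ) → 0 for every ψ ∈ H, let f be a bounded conjugate-linear functional on H, and let φ ∈ H be the unique solution of b(φ,ψ) = f(ψ) for all ψ ∈ H. Then for every ε > 0 there exists ℓ₀ ∈ ℕ such that for all ℓ ≥ ℓ₀ the Galerkin solution Φ_ℓ ∈ X_ℓ exists, is unique, and satisfies ‖φ − Φ_ℓ‖ ≤ (1 + ε) · inf over Ψ ∈ X_ℓ of ‖φ − Ψ‖; i.e., the quasi-optimality constants C_ℓ can be chosen with C_ℓ → 1. -/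
open scoped InnerProductSpace ComplexConjugate NNReal
open Filter Topology Metric

/-! Write `P_ℓ` for the orthogonal projection onto `X ℓ` and `Q_ℓ = 1 - P_ℓ`. Since `Q_ℓ → 0`
pointwise with `‖Q_ℓ‖ ≤ 1`, the convergence is uniform on the relatively compact set
`C (closedBall 0 1)`, so `‖Q_ℓ C‖ → 0`. By the C*-identity `‖C Q_ℓ‖² ≤ ‖Q_ℓ (C† C)‖`, and
`C† C` is compact, so `‖C Q_ℓ‖ → 0` as well. The Fredholm alternative makes the injective operator `1 + C` bounded
below by some `c > 0`, hence `P_ℓ (1 + C)` is bounded below on `X ℓ` by `c - γ_ℓ` with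
`γ_ℓ → 0`, and the finite-dimensional Galerkin system is uniquely solvable. Splitting the error
`φ - Φ = Q_ℓ φ + x` with `x ∈ X ℓ`, Galerkin orthogonality gives `P_ℓ (1 + C) x = -P_ℓ C Q_ℓ φ`,
so `(c - γ_ℓ) ‖x‖ ≤ γ_ℓ ‖Q_ℓ φ‖` and the quasi-optimality constant is
`1 + γ_ℓ / (c - γ_ℓ) → 1`. -/

theorem tendstoUniformlyOn_of_lipschitzWith_of_tendsto {ι X Y : Type*} [PseudoMetricSpace X]
    [PseudoMetricSpace Y] {l : Filter ι} {F : ι → X → Y} {f : X → Y} {K : ℝ≥0}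
    (hF : ∀ i, LipschitzWith K (F i)) (hlim : ∀ x, Tendsto (F · x) l (𝓝 (f x)))
    {S : Set X} (hS : IsCompact S) : TendstoUniformlyOn F f l S := by
  have hequi := (LipschitzWith.uniformEquicontinuous F K hF).equicontinuous
  have := (EquicontinuousOn.tendsto_uniformOnFun_iff_pi' (𝔖 := {S}) (by simpa using hS)
    (fun _ _ => hequi.equicontinuousOn _) l f).2 ?_
  · exact UniformOnFun.tendsto_iff_tendstoUniformlyOn.1 this S rfl
  · exact tendsto_pi_nhds.2 fun x => hlim x

section Normed

variable {𝕜 E F G : Type*} [RCLike 𝕜] [NormedAddCommGroup E] [NormedSpace 𝕜 E]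
  [NormedAddCommGroup F] [NormedSpace 𝕜 F] [NormedAddCommGroup G] [NormedSpace 𝕜 G]

theorem IsCompactOperator.tendsto_norm_comp {ι : Type*} {l : Filter ι} {T : ι → E →L[𝕜] F}
    {M : ℝ≥0} (hT : ∀ i, ‖T i‖ ≤ M) (hlim : ∀ x, Tendsto (T · x) l (𝓝 0))
    {K : G →L[𝕜] E} (hK : IsCompactOperator K) :
    Tendsto (fun i => ‖T i ∘L K‖) l (𝓝 0) := by
  have hunif := tendstoUniformlyOn_of_lipschitzWith_of_tendsto
    (fun i => (T i).lipschitzWith_of_opNorm_le (hT i)) hlim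
    (hK.isCompact_closure_image_closedBall 1)
  rw [Metric.tendsto_nhds]
  intro ε hε
  filter_upwards [Metric.tendstoUniformlyOn_iff.1 hunif (ε / 2) (half_pos hε)] with i hi
  rw [Real.dist_0_eq_abs, abs_of_nonneg (norm_nonneg _)]
  refine (ContinuousLinearMap.opNorm_le_of_unit_norm (half_pos hε).le fun x hx => ?_).trans_lt
    (half_lt_self hε)
  simpa using (hi (K x) (subset_closure ⟨x, by simp [hx], rfl⟩)).le

theorem IsCompactOperator.exists_pos_mul_norm_le_norm_add_self
    {C : E →L[𝕜] E} (hC : IsCompactOperator C) (hinj : ∀ x, x + C x = 0 → x = 0) :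
    ∃ c > 0, ∀ x, c * ‖x‖ ≤ ‖x + C x‖ := by
  have hμ : ¬ Module.End.HasEigenvalue (C : Module.End 𝕜 E) (-1) := by
    rw [Module.End.hasEigenvalue_iff, Submodule.ne_bot_iff]
    rintro ⟨x, hx, hx0⟩
    refine hx0 (hinj x ?_)
    rw [Module.End.mem_eigenspace_iff] at hx
    simpa [neg_one_smul] using congrArg (x + ·) hx
  obtain ⟨c, hc, hbound⟩ := antilipschitzWith_iff_exists_mul_le_norm.1
    (hC.antilipschitz_of_not_hasEigenvalue (neg_ne_zero.2 one_ne_zero) hμ)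
  exact ⟨c, hc, fun x => by simpa [add_comm] using hbound x⟩

end Normed

section Hilbert

variable {𝕜 E : Type*} [RCLike 𝕜] [NormedAddCommGroup E] [InnerProductSpace 𝕜 E]

theorem ContinuousLinearMap.norm_comp_sq_le [CompleteSpace E] {Q K : E →L[𝕜] E}
    (hQ : IsSelfAdjoint Q) (hQ1 : ‖Q‖ ≤ 1) :
    ‖K ∘L Q‖ ^ 2 ≤ ‖Q ∘L (adjoint K ∘L K)‖ := by
  calc ‖K ∘L Q‖ ^ 2 = ‖(Q ∘L (adjoint K ∘L K)) ∘L Q‖ := by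
        rw [sq, ← norm_adjoint_comp_self, adjoint_comp, hQ.adjoint_eq]; rfl
    _ ≤ ‖Q ∘L (adjoint K ∘L K)‖ * ‖Q‖ := opNorm_comp_le _ _
    _ ≤ ‖Q ∘L (adjoint K ∘L K)‖ := mul_le_of_le_one_right (norm_nonneg _) hQ1

theorem Submodule.norm_starProjection_orthogonal_le_infDist (K : Submodule 𝕜 E)
    [K.HasOrthogonalProjection] (y : E) : ‖Kᗮ.starProjection y‖ ≤ infDist y K := by
  rw [starProjection_orthogonal_val]
  refine (le_infDist ⟨0, K.zero_mem⟩).2 fun x hx => ?_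
  rw [starProjection_minimal, dist_eq_norm]
  exact ciInf_le ⟨0, Set.forall_mem_range.2 fun _ => norm_nonneg _⟩ (⟨x, hx⟩ : K)

section Approximation

variable {ι : Type*} {l : Filter ι} {X : ι → Submodule 𝕜 E}
  [∀ i, (X i).HasOrthogonalProjection] {C : E →L[𝕜] E}

theorem IsCompactOperator.tendsto_norm_starProjection_orthogonal_comp
    (hdense : ∀ ψ, Tendsto (fun i => infDist ψ (X i : Set E)) l (𝓝 0))
    (hC : IsCompactOperator C) :
    Tendsto (fun i => ‖(X i)ᗮ.starProjection ∘L C‖) l (𝓝 0) :=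
  hC.tendsto_norm_comp (M := 1) (fun i => by simpa using (X i)ᗮ.starProjection_norm_le)
    fun ψ => squeeze_zero_norm (fun i => (X i).norm_starProjection_orthogonal_le_infDist ψ)
      (hdense ψ)

theorem IsCompactOperator.tendsto_norm_comp_starProjection_orthogonal [CompleteSpace E]
    (hdense : ∀ ψ, Tendsto (fun i => infDist ψ (X i : Set E)) l (𝓝 0))
    (hC : IsCompactOperator C) :
    Tendsto (fun i => ‖C ∘L (X i)ᗮ.starProjection‖) l (𝓝 0) := by
  have hCC := IsCompactOperator.tendsto_norm_starProjection_orthogonal_comp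
    (C := ContinuousLinearMap.adjoint C ∘L C) hdense
    (hC.clm_comp (ContinuousLinearMap.adjoint C) :)
  have hsq := squeeze_zero (fun i => sq_nonneg _) (fun i => ContinuousLinearMap.norm_comp_sq_le
    (K := C) (isSelfAdjoint_starProjection (X i)ᗮ) (X i)ᗮ.starProjection_norm_le) hCC
  simpa using hsq.sqrt

end Approximation

namespace Submodule

variable (K : Submodule 𝕜 E) [K.HasOrthogonalProjection] {A : E →L[𝕜] E} {m : ℝ}

theorem existsUnique_galerkin [FiniteDimensional 𝕜 K] (hm : 0 < m)
    (hA : ∀ x ∈ K, m * ‖x‖ ≤ ‖K.starProjection (A x)‖) (φ : E) :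
    ∃! Φ, Φ ∈ K ∧ A (φ - Φ) ∈ Kᗮ := by
  have hinj : ∀ x ∈ K, A x ∈ Kᗮ → x = 0 := fun x hx hAx => by
    have := hA x hx
    rw [(K.starProjection_apply_eq_zero_iff).2 hAx, norm_zero] at this
    exact norm_eq_zero.1 (le_antisymm (nonpos_of_mul_nonpos_right this hm) (norm_nonneg _))
  let L : K →ₗ[𝕜] K := K.orthogonalProjectionOnto ∘L A ∘L K.subtypeL
  have hL : Function.Injective L := by
    rw [← LinearMap.ker_eq_bot, LinearMap.ker_eq_bot']
    exact fun x hx => Subtype.ext (hinj x x.2 (orthogonalProjectionOnto_eq_zero_iff.1 hx))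
  obtain ⟨Φ, hΦ⟩ := LinearMap.injective_iff_surjective.1 hL (K.orthogonalProjectionOnto (A φ))
  have hgal : A (φ - Φ) ∈ Kᗮ := by
    rw [← orthogonalProjectionOnto_eq_zero_iff, map_sub, map_sub]
    exact sub_eq_zero.2 hΦ.symm
  refine ⟨Φ, ⟨Φ.2, hgal⟩, fun Ψ ⟨hΨ, hΨA⟩ => sub_eq_zero.1 (hinj _ (sub_mem hΨ Φ.2) ?_)⟩
  have hdiff : Ψ - Φ = (φ - Φ) - (φ - Ψ) := by abel
  rw [hdiff, map_sub]
  exact sub_mem hgal hΨA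

theorem norm_sub_le_of_galerkin {δ : ℝ} (hm : 0 < m)
    (hA : ∀ x ∈ K, m * ‖x‖ ≤ ‖K.starProjection (A x)‖)
    (hAorth : ∀ d ∈ Kᗮ, ‖K.starProjection (A d)‖ ≤ δ * ‖d‖)
    {φ Φ : E} (hΦ : Φ ∈ K) (hgal : A (φ - Φ) ∈ Kᗮ) :
    ‖φ - Φ‖ ≤ (1 + δ / m) * ‖Kᗮ.starProjection φ‖ := by
  set d := Kᗮ.starProjection φ
  set x := K.starProjection φ - Φ
  have hx : x ∈ K := sub_mem (K.starProjection_apply_mem φ) hΦ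
  have hsplit : φ - Φ = d + x := by
    simp only [d, x, starProjection_orthogonal_val]; abel
  have hPA : K.starProjection (A x) = -K.starProjection (A d) := by
    have := (K.starProjection_apply_eq_zero_iff).2 hgal
    rw [hsplit, map_add, map_add] at this
    exact eq_neg_of_add_eq_zero_right this
  have hxd : m * ‖x‖ ≤ δ * ‖d‖ :=
    calc m * ‖x‖ ≤ ‖K.starProjection (A x)‖ := hA x hx
      _ = ‖K.starProjection (A d)‖ := by rw [hPA, norm_neg]
      _ ≤ δ * ‖d‖ := hAorth d (Kᗮ.starProjection_apply_mem φ)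
  calc ‖φ - Φ‖ ≤ ‖d‖ + ‖x‖ := hsplit ▸ norm_add_le d x
    _ ≤ ‖d‖ + δ / m * ‖d‖ := by
      gcongr
      rw [div_mul_eq_mul_div, le_div_iff₀ hm]
      linarith
    _ = (1 + δ / m) * ‖d‖ := by ring

variable {C : E →L[𝕜] E} {c γ : ℝ}

theorem sub_mul_norm_le_norm_starProjection_one_add_apply
    (hc : ∀ x, c * ‖x‖ ≤ ‖x + C x‖) (hγ : ‖Kᗮ.starProjection ∘L C‖ ≤ γ) :
    ∀ x ∈ K, (c - γ) * ‖x‖ ≤ ‖K.starProjection ((1 + C) x)‖ := by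
  intro x hx
  have hP : K.starProjection ((1 + C) x) = (x + C x) - Kᗮ.starProjection (C x) := by
    rw [starProjection_orthogonal_val]
    simp only [add_apply, one_apply_eq_self, map_add, (K.starProjection_eq_self_iff).2 hx]
    abel
  calc (c - γ) * ‖x‖ = c * ‖x‖ - γ * ‖x‖ := by ring
    _ ≤ ‖x + C x‖ - ‖Kᗮ.starProjection (C x)‖ := by
      gcongr
      · exact hc x
      · exact ((Kᗮ.starProjection ∘L C).le_opNorm x).trans (by gcongr)
    _ ≤ ‖K.starProjection ((1 + C) x)‖ := hP ▸ norm_sub_norm_le _ _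

theorem norm_starProjection_one_add_apply_le (hγ : ‖C ∘L Kᗮ.starProjection‖ ≤ γ) :
    ∀ d ∈ Kᗮ, ‖K.starProjection ((1 + C) d)‖ ≤ γ * ‖d‖ := by
  intro d hd
  have hPd : K.starProjection d = 0 := (K.starProjection_apply_eq_zero_iff).2 hd
  calc ‖K.starProjection ((1 + C) d)‖ = ‖K.starProjection (C d)‖ := by
        simp [hPd]
    _ ≤ ‖C d‖ := K.norm_starProjection_apply_le _
    _ = ‖(C ∘L Kᗮ.starProjection) d‖ := by
        simp [(Kᗮ.starProjection_eq_self_iff).2 hd]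
    _ ≤ γ * ‖d‖ := ((C ∘L Kᗮ.starProjection).le_opNorm d).trans (by gcongr)

theorem galerkin_one_add [FiniteDimensional 𝕜 K] (hc : ∀ x, c * ‖x‖ ≤ ‖x + C x‖)
    (hleft : ‖Kᗮ.starProjection ∘L C‖ ≤ γ) (hright : ‖C ∘L Kᗮ.starProjection‖ ≤ γ)
    (hγc : γ < c) (φ : E) :
    (∃! Φ, Φ ∈ K ∧ (1 + C) (φ - Φ) ∈ Kᗮ) ∧ ∀ Φ ∈ K, (1 + C) (φ - Φ) ∈ Kᗮ →
      ‖φ - Φ‖ ≤ (1 + γ / (c - γ)) * ‖Kᗮ.starProjection φ‖ := by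
  have hA := K.sub_mul_norm_le_norm_starProjection_one_add_apply hc hleft
  have hm : 0 < c - γ := sub_pos.2 hγc
  exact ⟨K.existsUnique_galerkin hm hA φ, fun Φ hΦ hgal =>
    K.norm_sub_le_of_galerkin hm hA (K.norm_starProjection_one_add_apply_le hright) hΦ hgal⟩

end Submodule

end Hilbert

theorem statement4_general
    {H : Type*} [NormedAddCommGroup H] [InnerProductSpace ℂ H] [CompleteSpace H]
    (C : H →L[ℂ] H) (hC : IsCompactOperator C)
    (b : H → H → ℂ) (hb : ∀ u v : H, b u v = ⟪v, u⟫_ℂ + ⟪v, C u⟫_ℂ)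
    (hwp : ∀ φ : H, (∀ ψ : H, b φ ψ = 0) → φ = 0)
    (X : ℕ → Submodule ℂ H) (hXfin : ∀ ℓ, FiniteDimensional ℂ (X ℓ))
    (hdense : ∀ ψ : H,
      Filter.Tendsto (fun ℓ => Metric.infDist ψ (X ℓ : Set H)) Filter.atTop (nhds 0))
    (f : H → ℂ)
    (φ : H) (hφ : ∀ ψ : H, b φ ψ = f ψ) :
    ∀ ε : ℝ, 0 < ε → ∃ ℓ₀ : ℕ, ∀ ℓ : ℕ, ℓ₀ ≤ ℓ →
      (∃! Φ : H, Φ ∈ X ℓ ∧ ∀ Ψ ∈ X ℓ, b Φ Ψ = f Ψ) ∧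
      (∀ Φ : H, Φ ∈ X ℓ → (∀ Ψ ∈ X ℓ, b Φ Ψ = f Ψ) →
        ‖φ - Φ‖ ≤ (1 + ε) * Metric.infDist φ (X ℓ : Set H)) := by
  have : ∀ ℓ, (X ℓ).HasOrthogonalProjection := fun ℓ =>
    have := hXfin ℓ
    have := FiniteDimensional.complete ℂ (X ℓ)
    inferInstance
  have hgal : ∀ ℓ Φ, (∀ Ψ ∈ X ℓ, b Φ Ψ = f Ψ) ↔ (1 + C) (φ - Φ) ∈ (X ℓ)ᗮ := fun ℓ Φ => by
    simp_rw [← hφ, hb, ← inner_add_right, Submodule.mem_orthogonal, map_sub, inner_sub_right,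
      sub_eq_zero, eq_comm]
    rfl
  obtain ⟨c, hc, hlow⟩ := hC.exists_pos_mul_norm_le_norm_add_self fun x hx =>
    hwp x fun ψ => by rw [hb, ← inner_add_right, hx, inner_zero_right]
  intro ε hε
  set γ := ε * c / (1 + ε)
  have hγ : 0 < γ := by positivity
  have hγc : γ < c := (div_lt_iff₀ (by positivity)).2 (by linarith)
  have hratio : γ / (c - γ) = ε := by
    rw [div_eq_iff (sub_pos.2 hγc).ne']
    linear_combination (div_mul_cancel₀ (ε * c) (by positivity : 1 + ε ≠ 0))
  obtain ⟨ℓ₀, hℓ₀⟩ := (((hC.tendsto_norm_starProjection_orthogonal_comp hdense).eventually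
    (eventually_le_nhds hγ)).and ((hC.tendsto_norm_comp_starProjection_orthogonal hdense).eventually
    (eventually_le_nhds hγ))).exists_forall_of_atTop
  refine ⟨ℓ₀, fun ℓ hℓ => ?_⟩
  have := hXfin ℓ
  obtain ⟨hunique, hbound⟩ := (X ℓ).galerkin_one_add hlow (hℓ₀ ℓ hℓ).1 (hℓ₀ ℓ hℓ).2 hγc φ
  simp_rw [hgal]
  refine ⟨hunique, fun Φ hΦ hΦgal => (hbound Φ hΦ hΦgal).trans ?_⟩
  rw [hratio]
  gcongr
  exact (X ℓ).norm_starProjection_orthogonal_le_infDist φ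

/-- Asymptotic Céa lemma with constants tending to 1:
for `b(u,v) = ⟨u,v⟩ + ⟨C u, v⟩` with compact `C` (forms linear in the first and
conjugate-linear in the second argument, so `⟨u,v⟩ = ⟪v,u⟫_ℂ` in Mathlib's
convention), a nested asymptotically dense sequence of finite-dimensional
subspaces, and the continuous solution `φ`: for every `ε > 0` the Galerkin
solutions exist, are unique, and are `(1+ε)`-quasi-optimal for all large `ℓ`. -/
theorem statement4
    {H : Type*} [NormedAddCommGroup H] [InnerProductSpace ℂ H] [CompleteSpace H]
    (C : H →L[ℂ] H) (hC : IsCompactOperator C)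
    (b : H → H → ℂ) (hb : ∀ u v : H, b u v = ⟪v, u⟫_ℂ + ⟪v, C u⟫_ℂ)
    (hwp : ∀ φ : H, (∀ ψ : H, b φ ψ = 0) → φ = 0)
    (X : ℕ → Submodule ℂ H) (hXfin : ∀ ℓ, FiniteDimensional ℂ (X ℓ))
    (hXnest : ∀ ℓ, X ℓ ≤ X (ℓ + 1))
    (hdense : ∀ ψ : H,
      Filter.Tendsto (fun ℓ => Metric.infDist ψ (X ℓ : Set H)) Filter.atTop (nhds 0))
    (f : H → ℂ)
    (hf_add : ∀ x y : H, f (x + y) = f x + f y)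
    (hf_smul : ∀ (c : ℂ) (x : H), f (c • x) = conj c * f x)
    (hf_bdd : ∃ Cf : ℝ, ∀ x : H, ‖f x‖ ≤ Cf * ‖x‖)
    (φ : H) (hφ : ∀ ψ : H, b φ ψ = f ψ) :
    ∀ ε : ℝ, 0 < ε → ∃ ℓ₀ : ℕ, ∀ ℓ : ℕ, ℓ₀ ≤ ℓ →
      (∃! Φ : H, Φ ∈ X ℓ ∧ ∀ Ψ ∈ X ℓ, b Φ Ψ = f Ψ) ∧
      (∀ Φ : H, Φ ∈ X ℓ → (∀ Ψ ∈ X ℓ, b Φ Ψ = f Ψ) →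
        ‖φ - Φ‖ ≤ (1 + ε) * Metric.infDist φ (X ℓ : Set H)) :=
  statement4_general C hC b hb hwp X hXfin hdense f φ hφ
end

section
/- Let C ≥ 0 and let 0 < θ < θ_opt := (1 + C²)^{−1}. Then there exists γ ∈ (0,1) such that for all nonnegative real numbers η•, η∘, ρ satisfying η•² − ρ² ≤ (η∘ + Cρ)² and η∘ ≤ γ·η•, it holds that θ·η•² ≤ ρ². -/
set_option maxHeartbeats 1000000


/-- Optimality of the Dörfler marking: for `C ≥ 0` and
`0 < θ < θ_opt = (1 + C²)⁻¹` there exists `γ ∈ (0,1)` such that for all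
nonnegative `η•, η∘, ρ` with `η•² − ρ² ≤ (η∘ + Cρ)²` and `η∘ ≤ γ η•` one has
`θ η•² ≤ ρ²`. -/
theorem statement7
    (C : ℝ) (hC : 0 ≤ C) (θ : ℝ) (hθ0 : 0 < θ) (hθ : θ < (1 + C ^ 2)⁻¹) :
    ∃ γ : ℝ, 0 < γ ∧ γ < 1 ∧
      ∀ ηb ηo ρ : ℝ, 0 ≤ ηb → 0 ≤ ηo → 0 ≤ ρ →
        ηb ^ 2 - ρ ^ 2 ≤ (ηo + C * ρ) ^ 2 → ηo ≤ γ * ηb →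
          θ * ηb ^ 2 ≤ ρ ^ 2 := by
  have hC2 : (0:ℝ) < 1 + C ^ 2 := by positivity
  obtain ⟨t, ht_def⟩ : ∃ t : ℝ, t = θ * (1 + C ^ 2) := ⟨_, rfl⟩
  have ht1 : t < 1 := by
    rw [ht_def]
    have := (lt_div_iff₀ hC2).mp (by rwa [← one_div] at hθ)
    linarith
  have ht0 : 0 < t := by rw [ht_def]; positivity
  -- choose δ
  have hδex : ∃ δ : ℝ, 0 < δ ∧ δ * (2 * (θ * C ^ 2 + 1)) = 1 - t := by
    refine ⟨(1 - t) / (2 * (θ * C ^ 2 + 1)), div_pos (by linarith) (by positivity), ?_⟩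
    field_simp
  obtain ⟨δ, hδ0, hδe⟩ := hδex
  have hδC : θ * δ * C ^ 2 ≤ (1 - t) / 2 := by
    rw [le_div_iff₀ (by norm_num : (0:ℝ) < 2)]
    nlinarith [mul_nonneg (mul_nonneg hθ0.le hδ0.le) (sq_nonneg C)]
  -- choose g2 with (1 + 1/δ) * g2 = (1-t)/2
  have hg2ex : ∃ g2 : ℝ, 0 < g2 ∧ (1 + 1/δ) * g2 = (1 - t) / 2 := by
    refine ⟨(1 - t) * δ / (2 * (1 + δ)), div_pos (by nlinarith) (by positivity), ?_⟩
    field_simp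
    ring
  obtain ⟨g2, hg20, hg2e⟩ := hg2ex
  refine ⟨min (1/2) (Real.sqrt g2), ?_, ?_, ?_⟩
  · exact lt_min (by norm_num) (Real.sqrt_pos.mpr hg20)
  · exact lt_of_le_of_lt (min_le_left _ _) (by norm_num)
  · intro ηb ηo ρ hηb hηo hρ hmain hmark
    set γ : ℝ := min (1/2) (Real.sqrt g2) with hγ_def
    have hγ0 : 0 ≤ γ := le_min (by norm_num) (Real.sqrt_nonneg _)
    have hγsq : γ ^ 2 ≤ g2 := by
      have h : γ ≤ Real.sqrt g2 := min_le_right _ _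
      calc γ ^ 2 ≤ (Real.sqrt g2) ^ 2 := by nlinarith [Real.sqrt_nonneg g2]
        _ = g2 := Real.sq_sqrt hg20.le
    -- Young: (ηo + Cρ)² ≤ (1 + 1/δ) ηo² + (1 + δ) C² ρ²
    have hyoung : (ηo + C * ρ) ^ 2 ≤ (1 + 1/δ) * ηo ^ 2 + (1 + δ) * C ^ 2 * ρ ^ 2 := by
      have h := sq_nonneg (ηo - δ * (C * ρ))
      have h2 : 2 * (ηo * (C * ρ)) ≤ ηo ^ 2 / δ + δ * (C * ρ) ^ 2 := by
        rw [div_add' _ _ _ (ne_of_gt hδ0), le_div_iff₀ hδ0]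
        nlinarith
      have h3 : ηo ^ 2 / δ = (1/δ) * ηo ^ 2 := by ring
      nlinarith
    have hηo2 : ηo ^ 2 ≤ γ ^ 2 * ηb ^ 2 := by nlinarith
    have hpos : (0:ℝ) ≤ 1 + 1/δ := by positivity
    have hcomb : (1 - (1 + 1/δ) * γ ^ 2) * ηb ^ 2 ≤ (1 + (1 + δ) * C ^ 2) * ρ ^ 2 := by
      have hp : (1 + 1/δ) * ηo ^ 2 ≤ (1 + 1/δ) * (γ ^ 2 * ηb ^ 2) :=
        mul_le_mul_of_nonneg_left hηo2 hpos
      have e1 : (1 - (1 + 1/δ) * γ ^ 2) * ηb ^ 2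
          = ηb ^ 2 - (1 + 1/δ) * (γ ^ 2 * ηb ^ 2) := by ring
      have e2 : (1 + (1 + δ) * C ^ 2) * ρ ^ 2 = ρ ^ 2 + (1 + δ) * C ^ 2 * ρ ^ 2 := by ring
      linarith
    have hγb : (1 + 1/δ) * γ ^ 2 ≤ (1 - t) / 2 := by
      calc (1 + 1/δ) * γ ^ 2 ≤ (1 + 1/δ) * g2 := mul_le_mul_of_nonneg_left hγsq hpos
        _ = (1 - t) / 2 := hg2e
    have hθbound : θ * (1 + (1 + δ) * C ^ 2) ≤ (1 + t) / 2 := by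
      have he : θ * (1 + (1 + δ) * C ^ 2) = t + θ * δ * C ^ 2 := by rw [ht_def]; ring
      linarith
    have hfac : (0:ℝ) < 1 + (1 + δ) * C ^ 2 := by positivity
    have key : θ * (1 + (1 + δ) * C ^ 2) * ηb ^ 2 ≤ (1 + (1 + δ) * C ^ 2) * ρ ^ 2 := by
      have h1 := mul_le_mul_of_nonneg_right
        (show θ * (1 + (1 + δ) * C ^ 2) ≤ 1 - (1 + 1/δ) * γ ^ 2 by linarith)
        (sq_nonneg ηb)
      linarith
    have hfin : (1 + (1 + δ) * C ^ 2) * (θ * ηb ^ 2) ≤ (1 + (1 + δ) * C ^ 2) * ρ ^ 2 := by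
      have he : (1 + (1 + δ) * C ^ 2) * (θ * ηb ^ 2)
          = θ * (1 + (1 + δ) * C ^ 2) * ηb ^ 2 := by ring
      linarith
    exact le_of_mul_le_mul_left hfin hfac
end

section
/- Let (a_ℓ)_{ℓ∈ℕ} be a sequence of nonnegative real numbers and C ≥ 1 a constant such that the series ∑_{j=ℓ}^{∞} a_j converges and satisfies ∑_{j=ℓ}^{∞} a_j ≤ C·a_ℓ for every ℓ ∈ ℕ. Then a_{ℓ+n} ≤ C·(1 − 1/C)^n·a_ℓ for all ℓ, n ∈ ℕ. -/
/-- Tail-summability criterion for R-linear convergence: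
if the nonnegative sequence `a` is summable and every tail satisfies
`∑_{j=ℓ}^∞ a j ≤ C a ℓ` with `C ≥ 1`, then
`a (ℓ+n) ≤ C (1 − 1/C)^n a ℓ` for all `ℓ, n`. -/
theorem statement9
    (a : ℕ → ℝ) (ha : ∀ ℓ, 0 ≤ a ℓ) (C : ℝ) (hC : 1 ≤ C)
    (hsum : Summable a)
    (htail : ∀ ℓ : ℕ, ∑' j : ℕ, a (ℓ + j) ≤ C * a ℓ) :
    ∀ ℓ n : ℕ, a (ℓ + n) ≤ C * (1 - 1 / C) ^ n * a ℓ := by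
  have hC0 : (0:ℝ) < C := lt_of_lt_of_le one_pos hC
  set T : ℕ → ℝ := fun ℓ => ∑' j : ℕ, a (ℓ + j) with hT
  have hsumT : ∀ ℓ, Summable fun j => a (ℓ + j) := by
    intro ℓ
    have := (summable_nat_add_iff ℓ).mpr hsum
    simpa [Nat.add_comm] using this
  have hrec : ∀ ℓ, T ℓ = a ℓ + T (ℓ + 1) := by
    intro ℓ
    have h := Summable.tsum_eq_zero_add (hsumT ℓ)
    simpa [hT, Nat.add_assoc, Nat.add_comm, Nat.add_left_comm] using h
  have hTnonneg : ∀ ℓ, 0 ≤ T ℓ := fun ℓ => tsum_nonneg (fun j => ha _)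
  have haT : ∀ ℓ, a ℓ ≤ T ℓ := by
    intro ℓ
    have := hrec ℓ
    nlinarith [hTnonneg (ℓ + 1)]
  have hstep : ∀ ℓ, T (ℓ + 1) ≤ (1 - 1 / C) * T ℓ := by
    intro ℓ
    have h1 : T ℓ / C ≤ a ℓ := by
      have := htail ℓ
      rw [div_le_iff₀ hC0]
      linarith [this]
    have := hrec ℓ
    have : T (ℓ + 1) = T ℓ - a ℓ := by linarith
    rw [this]
    have : (1 - 1 / C) * T ℓ = T ℓ - T ℓ / C := by ring
    rw [this]
    linarith
  have hgeo : ∀ ℓ n, T (ℓ + n) ≤ (1 - 1 / C) ^ n * T ℓ := by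
    intro ℓ n
    induction n with
    | zero => simp
    | succ n ih =>
      have h1 : T (ℓ + (n + 1)) ≤ (1 - 1 / C) * T (ℓ + n) := by
        simpa [Nat.add_assoc] using hstep (ℓ + n)
      have hq0 : (0:ℝ) ≤ 1 - 1 / C := by
        have : 1 / C ≤ 1 := by
          rw [div_le_one hC0]; linarith
        linarith
      calc T (ℓ + (n + 1)) ≤ (1 - 1 / C) * T (ℓ + n) := h1
        _ ≤ (1 - 1 / C) * ((1 - 1 / C) ^ n * T ℓ) := by
            exact mul_le_mul_of_nonneg_left ih hq0
        _ = (1 - 1 / C) ^ (n + 1) * T ℓ := by ring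
  intro ℓ n
  have hq0 : (0:ℝ) ≤ 1 - 1 / C := by
    have : 1 / C ≤ 1 := by rw [div_le_one hC0]; linarith
    linarith
  calc a (ℓ + n) ≤ T (ℓ + n) := haT _
    _ ≤ (1 - 1 / C) ^ n * T ℓ := hgeo ℓ n
    _ ≤ (1 - 1 / C) ^ n * (C * a ℓ) := by
        exact mul_le_mul_of_nonneg_left (htail ℓ) (pow_nonneg hq0 n)
    _ = C * (1 - 1 / C) ^ n * a ℓ := by ring
end

section
/- Let (η_ℓ)_{ℓ∈ℕ} and (d_ℓ)_{ℓ∈ℕ} be sequences of nonnegative real numbers, 0 < q < 1 and C₁, C₂ ≥ 0 constants, such that (i) η_{ℓ+1}² ≤ q·η_ℓ² + C₁·d_ℓ² for all ℓ, and (ii) ∑_{j=ℓ}^{N} d_j² ≤ C₂·η_ℓ² for all N ≥ ℓ. Then there exist C_lin ≥ 1 and 0 < q_lin < 1, depending only on q, C₁ and C₂, such that η_{ℓ+n}² ≤ C_lin·q_lin^n·η_ℓ² for all ℓ, n ∈ ℕ. -/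
private lemma sum_Icc_bot (f : ℕ → ℝ) {a b : ℕ} (h : a ≤ b) :
    ∑ j ∈ Finset.Icc a b, f j = f a + ∑ j ∈ Finset.Icc (a + 1) b, f j := by
  have hins : Finset.Icc a b = insert a (Finset.Icc (a + 1) b) := by
    rw [Finset.Icc_add_one_left_eq_Ioc, Finset.Ioc_insert_left h]
  rw [hins, Finset.sum_insert (by simp)]


/-- Abstract linear convergence: if the nonnegative sequences
`η` (estimators) and `d` (distances of consecutive Galerkin solutions) satisfy
the estimator reduction `η_{ℓ+1}² ≤ q η_ℓ² + C₁ d_ℓ²` and the general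
quasi-orthogonality `∑_{j=ℓ}^N d_j² ≤ C₂ η_ℓ²`, then there exist `C_lin ≥ 1`
and `0 < q_lin < 1` with `η_{ℓ+n}² ≤ C_lin q_lin^n η_ℓ²` for all `ℓ, n`. -/
theorem statement10
    (η d : ℕ → ℝ) (hη : ∀ ℓ, 0 ≤ η ℓ) (hd : ∀ ℓ, 0 ≤ d ℓ)
    (q : ℝ) (hq0 : 0 < q) (hq1 : q < 1)
    (C₁ C₂ : ℝ) (hC₁ : 0 ≤ C₁) (hC₂ : 0 ≤ C₂)
    (hred : ∀ ℓ : ℕ, η (ℓ + 1) ^ 2 ≤ q * η ℓ ^ 2 + C₁ * d ℓ ^ 2)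
    (horth : ∀ ℓ N : ℕ, ℓ ≤ N → ∑ j ∈ Finset.Icc ℓ N, d j ^ 2 ≤ C₂ * η ℓ ^ 2) :
    ∃ Clin qlin : ℝ, 1 ≤ Clin ∧ 0 < qlin ∧ qlin < 1 ∧
      ∀ ℓ n : ℕ, η (ℓ + n) ^ 2 ≤ Clin * qlin ^ n * η ℓ ^ 2 := by
  set a : ℕ → ℝ := fun j => η j ^ 2 with ha
  have ha0 : ∀ j, 0 ≤ a j := fun j => sq_nonneg _
  have h1q : 0 < 1 - q := by linarith
  set C : ℝ := (1 + C₁ * C₂) / (1 - q) with hC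
  have hCgt1 : 1 < C := by
    rw [hC, lt_div_iff₀ h1q]
    nlinarith [mul_nonneg hC₁ hC₂]
  have hCpos : 0 < C := lt_trans one_pos hCgt1
  -- Lemma A: tail sums bounded by C * a ℓ
  have lemA : ∀ ℓ M, ℓ ≤ M → ∑ j ∈ Finset.Icc ℓ M, a j ≤ C * a ℓ := by
    intro ℓ M hlM
    rcases Nat.eq_or_lt_of_le hlM with rfl | hlt
    · rw [Finset.Icc_self, Finset.sum_singleton]
      nlinarith [ha0 ℓ]
    · obtain ⟨M', rfl⟩ : ∃ M', M = M' + 1 := ⟨M - 1, by omega⟩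
      have hlM' : ℓ ≤ M' := by omega
      have hsum : ∑ j ∈ Finset.Icc ℓ M', a (j + 1)
          ≤ q * ∑ j ∈ Finset.Icc ℓ M', a j + C₁ * ∑ j ∈ Finset.Icc ℓ M', d j ^ 2 := by
        rw [Finset.mul_sum, Finset.mul_sum, ← Finset.sum_add_distrib]
        exact Finset.sum_le_sum fun j _ => hred j
      have hshift : ∑ j ∈ Finset.Icc ℓ M', a (j + 1)
          = ∑ j ∈ Finset.Icc (ℓ + 1) (M' + 1), a j := by
        rw [← Finset.map_add_right_Icc, Finset.sum_map]
        rfl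
      have hbot : ∑ j ∈ Finset.Icc ℓ (M' + 1), a j
          = a ℓ + ∑ j ∈ Finset.Icc (ℓ + 1) (M' + 1), a j :=
        sum_Icc_bot a (by omega)
      have htop : ∑ j ∈ Finset.Icc ℓ (M' + 1), a j
          = ∑ j ∈ Finset.Icc ℓ M', a j + a (M' + 1) :=
        Finset.sum_Icc_succ_top (by omega) a
      have hd2 : ∑ j ∈ Finset.Icc ℓ M', d j ^ 2 ≤ C₂ * a ℓ := horth ℓ M' hlM'
      have hd2' : C₁ * ∑ j ∈ Finset.Icc ℓ M', d j ^ 2 ≤ C₁ * (C₂ * a ℓ) :=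
        mul_le_mul_of_nonneg_left hd2 hC₁
      rw [hC, div_mul_eq_mul_div, le_div_iff₀ h1q]
      nlinarith [ha0 (M' + 1), ha0 ℓ, hsum, hshift ▸ hsum]
  have hr0 : (0:ℝ) < 1 - 1/C := by
    have : 1/C < 1 := by rw [div_lt_one hCpos]; exact hCgt1
    linarith
  have hr1 : 1 - 1/C < 1 := by
    have : 0 < 1/C := by positivity
    linarith
  set r : ℝ := 1 - 1/C with hrdef
  -- Lemma B: geometric decay of tail sums
  have lemB : ∀ n ℓ M, ℓ + n ≤ M →
      ∑ j ∈ Finset.Icc (ℓ + n) M, a j ≤ r ^ n * (C * a ℓ) := by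
    intro n
    induction n with
    | zero => intro ℓ M h; simpa using lemA ℓ M (by omega)
    | succ n ih =>
      intro ℓ M h
      have h' : ℓ + n ≤ M := by omega
      have ihM := ih ℓ M h'
      have hbot : ∑ j ∈ Finset.Icc (ℓ + n) M, a j
          = a (ℓ + n) + ∑ j ∈ Finset.Icc (ℓ + n + 1) M, a j :=
        sum_Icc_bot a (by omega)
      have hA : ∑ j ∈ Finset.Icc (ℓ + n) M, a j ≤ C * a (ℓ + n) := lemA _ M h'
      -- a (ℓ+n) ≥ (1/C) * tail
      have key : ∑ j ∈ Finset.Icc (ℓ + n + 1) M, a j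
          ≤ r * ∑ j ∈ Finset.Icc (ℓ + n) M, a j := by
        rw [hrdef]
        have hCinv : (1/C) * (∑ j ∈ Finset.Icc (ℓ + n) M, a j) ≤ a (ℓ + n) := by
          rw [div_mul_eq_mul_div, one_mul, div_le_iff₀ hCpos]
          linarith [hA]
        nlinarith [hbot]
      have hrn : (0:ℝ) ≤ r ^ n * (C * a ℓ) := by positivity
      have : ∑ j ∈ Finset.Icc (ℓ + n + 1) M, a j ≤ r * (r ^ n * (C * a ℓ)) := by
        calc ∑ j ∈ Finset.Icc (ℓ + n + 1) M, a j
            ≤ r * ∑ j ∈ Finset.Icc (ℓ + n) M, a j := key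
          _ ≤ r * (r ^ n * (C * a ℓ)) := mul_le_mul_of_nonneg_left ihM (le_of_lt hr0)
      calc ∑ j ∈ Finset.Icc (ℓ + (n + 1)) M, a j ≤ r * (r ^ n * (C * a ℓ)) := this
        _ = r ^ (n + 1) * (C * a ℓ) := by ring
  refine ⟨C, r, le_of_lt hCgt1, hr0, hr1, fun ℓ n => ?_⟩
  have := lemB n ℓ (ℓ + n) le_rfl
  rw [Finset.Icc_self, Finset.sum_singleton] at this
  calc a (ℓ + n) ≤ r ^ n * (C * a ℓ) := this
    _ = C * r ^ n * a ℓ := by ring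
end
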